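/- For every δ with |δ| < 1, the integral I_0(δ) := ∫₀¹ 1 / (1 − δ sin(2πv))^{3/2} dv satisfies I_0(δ) = (2/π) · 1/((1−δ)√(1+δ)) · E(2δ/(1+δ)), where E(m) = ∫₀^{π/2} √(1 − m sin²θ) dθ is the complete elliptic integral of the second kind. -/

import Mathlib

/-!
Substituting `u = 2πv`, shifting by a quarter period and halving the angle turns the average
of `g (sin (2πv))` into `(2/π) ∫₀^{π/2} g (2 sin² θ - 1) dθ`, because
`sin (x - π/2) = -cos x = 2 sin² (x/2) - 1`. For our `g` one has
`1 - δ (2 sin² θ - 1) = (1 + δ)(1 - m sin² θ)` with `m = 2δ/(1+δ)`, so it remains to use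
Legendre's identity `E(m) = (1 - m) ∫₀^{π/2} (1 - m sin² θ)^{-3/2} dθ`, which follows by
differentiating `m sin θ cos θ / √(1 - m sin² θ)`.
-/

noncomputable section

open Real intervalIntegral

/-- Complete elliptic integral of the second kind. -/
def ellipticE (m : ℝ) : ℝ :=
  ∫ θ in (0:ℝ)..(π/2), Real.sqrt (1 - m * Real.sin θ ^ 2)

open Set

theorem add_div_two_mem_uIcc {α : Type*} [Field α] [LinearOrder α] [IsStrictOrderedRing α]
    (a b : α) : (a + b) / 2 ∈ uIcc a b := by
  rcases le_total a b with h | h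
  · exact mem_uIcc_of_le (by linarith) (by linarith)
  · exact mem_uIcc_of_ge (by linarith) (by linarith)

theorem intervalIntegral.integral_eq_two_smul_of_symm {E : Type*} [NormedAddCommGroup E]
    [NormedSpace ℝ E] {f : ℝ → E} {a b : ℝ}
    (hf : IntervalIntegrable f MeasureTheory.volume a b)
    (hsymm : ∀ x, f (a + b - x) = f x) :
    ∫ x in a..b, f x = (2:ℝ) • ∫ x in a..(a + b) / 2, f x := by
  set c := (a + b) / 2
  have hc := add_div_two_mem_uIcc a b
  have hreflect : ∫ x in c..b, f x = ∫ x in a..c, f x := by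
    rw [← integral_congr fun x _ => hsymm x, integral_comp_sub_left]
    congr 1 <;> ring
  rw [← integral_add_adjacent_intervals (hf.mono_set (uIcc_subset_uIcc left_mem_uIcc hc))
    (hf.mono_set (uIcc_subset_uIcc hc right_mem_uIcc)), hreflect, two_smul]

theorem integral_comp_sin_two_pi_mul {E : Type*} [NormedAddCommGroup E] [NormedSpace ℝ E]
    {g : ℝ → E} (hg : ContinuousOn g (Icc (-1) 1)) :
    ∫ v in (0:ℝ)..1, g (sin (2 * π * v))
      = (2 / π) • ∫ θ in (0:ℝ)..(π / 2), g (2 * sin θ ^ 2 - 1) := by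
  have hperiodic : Function.Periodic (fun u => g (sin u)) (2 * π) := fun u => by
    simp only [sin_add_two_pi]
  have hsin_shift : ∀ x, sin (x - π / 2) = 2 * sin (x / 2) ^ 2 - 1 := fun x => by
    rw [sin_sub_pi_div_two, sin_sq_eq_half_sub, mul_div_cancel₀ x two_ne_zero]; ring
  have hcont : Continuous fun θ => g (2 * sin θ ^ 2 - 1) :=
    hg.comp_continuous (by fun_prop) fun θ =>
      ⟨by linarith [sq_nonneg (sin θ)], by linarith [sin_sq_le_one θ]⟩
  have hsymm : ∀ θ, g (2 * sin (0 + π - θ) ^ 2 - 1) = g (2 * sin θ ^ 2 - 1) := fun θ => by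
    rw [zero_add, sin_pi_sub]
  calc ∫ v in (0:ℝ)..1, g (sin (2 * π * v))
      = (2 * π)⁻¹ • ∫ u in (0:ℝ)..(2 * π), g (sin u) := by
        rw [integral_comp_mul_left (fun u => g (sin u)) (by positivity), mul_zero, mul_one]
    _ = (2 * π)⁻¹ • ∫ x in (0:ℝ)..(2 * π), g (sin (x - π / 2)) := by
        have hshift := hperiodic.intervalIntegral_add_eq 0 (-(π / 2))
        rw [zero_add] at hshift
        rw [integral_comp_sub_right (fun u => g (sin u)), zero_sub, hshift]
        congr 2; ring
    _ = (2 * π)⁻¹ • (2:ℝ) • ∫ θ in (0:ℝ)..π, g (2 * sin θ ^ 2 - 1) := by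
        simp_rw [hsin_shift]
        rw [integral_comp_div (fun θ => g (2 * sin θ ^ 2 - 1)) two_ne_zero, zero_div,
          mul_div_cancel_left₀ π two_ne_zero]
    _ = (2 / π) • ∫ θ in (0:ℝ)..(π / 2), g (2 * sin θ ^ 2 - 1) := by
        rw [integral_eq_two_smul_of_symm (hcont.intervalIntegrable 0 π) hsymm, zero_add,
          smul_smul, smul_smul]
        congr 1
        field_simp

theorem one_sub_mul_sin_sq_pos {m : ℝ} (hm : m < 1) (θ : ℝ) : 0 < 1 - m * sin θ ^ 2 := by
  rcases le_or_gt m 0 with h | h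
  · nlinarith [sq_nonneg (sin θ)]
  · nlinarith [sin_sq_le_one θ]

theorem rpow_three_halves_eq_mul_sqrt {x : ℝ} (hx : 0 ≤ x) : x ^ ((3:ℝ) / 2) = x * √x := by
  rw [sqrt_eq_rpow, show (3:ℝ) / 2 = 1 + 1 / 2 by norm_num, rpow_add' hx (by norm_num),
    rpow_one]

theorem hasDerivAt_mul_sin_mul_cos_div_sqrt {m : ℝ} (hm : m < 1) (θ : ℝ) :
    HasDerivAt (fun t => m * (sin t * cos t / √(1 - m * sin t ^ 2)))
      (√(1 - m * sin θ ^ 2) - (1 - m) * (1 / (1 - m * sin θ ^ 2) ^ ((3:ℝ) / 2))) θ := by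
  have hX := one_sub_mul_sin_sq_pos hm θ
  have hXd : HasDerivAt (fun t => 1 - m * sin t ^ 2) (-(m * (2 * sin θ ^ 1 * cos θ))) θ := by
    simpa using (((hasDerivAt_sin θ).pow 2).const_mul m).const_sub 1
  have hnum : HasDerivAt (fun t => sin t * cos t) (cos θ * cos θ + sin θ * -sin θ) θ :=
    (hasDerivAt_sin θ).mul (hasDerivAt_cos θ)
  refine ((hnum.div (hXd.sqrt hX.ne') (sqrt_pos.2 hX).ne').const_mul m).congr_deriv ?_
  rw [rpow_three_halves_eq_mul_sqrt hX.le]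
  have hsq : √(1 - m * sin θ ^ 2) ^ 2 = 1 - m * sin θ ^ 2 := sq_sqrt hX.le
  have hr := sqrt_pos.2 hX
  have hpyth := sin_sq_add_cos_sq θ
  generalize √(1 - m * sin θ ^ 2) = r at hsq hr ⊢
  field_simp
  rw [← hsq]
  field_simp
  linear_combination (m * (1 - 2 * sin θ ^ 2) - r ^ 2 - (1 - m * sin θ ^ 2)) * hsq
    + (m * r ^ 2 + m ^ 2 * sin θ ^ 2) * hpyth

theorem ellipticE_eq_one_sub_mul_integral {m : ℝ} (hm : m < 1) :
    ellipticE m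
      = (1 - m) * ∫ θ in (0:ℝ)..(π / 2), 1 / (1 - m * sin θ ^ 2) ^ ((3:ℝ) / 2) := by
  have hcont : Continuous fun θ => (1 - m) * (1 / (1 - m * sin θ ^ 2) ^ ((3:ℝ) / 2)) := by
    refine continuous_const.mul <| continuous_const.div ?_ fun θ =>
      (rpow_pos_of_pos (one_sub_mul_sin_sq_pos hm θ) _).ne'
    exact (by fun_prop : Continuous fun θ => 1 - m * sin θ ^ 2).rpow_const
      fun _ => Or.inr (by norm_num)
  have hsqrt : Continuous fun θ => √(1 - m * sin θ ^ 2) := by fun_prop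
  have hftc := integral_eq_sub_of_hasDerivAt
    (fun θ _ => hasDerivAt_mul_sin_mul_cos_div_sqrt hm θ)
    ((hsqrt.sub hcont).intervalIntegrable 0 (π / 2))
  rw [integral_sub (hsqrt.intervalIntegrable _ _) (hcont.intervalIntegrable _ _),
    integral_const_mul] at hftc
  simpa [ellipticE, sub_eq_zero] using hftc

theorem one_sub_mul_pos_of_abs_lt {δ t : ℝ} (hδ : |δ| < 1) (ht : |t| ≤ 1) :
    0 < 1 - δ * t := by
  have hlt : |δ * t| < 1 := by
    rw [abs_mul]; exact mul_lt_one_of_nonneg_of_lt_one_left (abs_nonneg δ) hδ ht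
  linarith [le_abs_self (δ * t)]

theorem continuousOn_one_div_one_sub_mul_rpow {δ : ℝ} (hδ : |δ| < 1) (p : ℝ) :
    ContinuousOn (fun t => 1 / (1 - δ * t) ^ p) (Icc (-1) 1) := by
  have hbase : ∀ t ∈ Icc (-1 : ℝ) 1, 0 < 1 - δ * t := fun t ht =>
    one_sub_mul_pos_of_abs_lt hδ (abs_le.2 ht)
  exact continuousOn_const.div
    ((by fun_prop : Continuous fun t => 1 - δ * t).continuousOn.rpow_const
      fun t ht => Or.inl (hbase t ht).ne')
    fun t ht => (rpow_pos_of_pos (hbase t ht) _).ne'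

theorem I0_elliptic_formula (δ : ℝ) (hδ : |δ| < 1) :
    (∫ v in (0:ℝ)..1, 1 / (1 - δ * Real.sin (2 * π * v)) ^ ((3:ℝ)/2))
      = (2 / π) * (1 / ((1 - δ) * Real.sqrt (1 + δ)))
        * ellipticE (2 * δ / (1 + δ)) := by
  obtain ⟨hδ_gt, hδ_lt⟩ := abs_lt.mp hδ
  have hpos : 0 < 1 + δ := by linarith
  set m := 2 * δ / (1 + δ) with hm_def
  have hm : m < 1 := by rw [div_lt_one hpos]; linarith
  have hfactor : ∀ θ, 1 / (1 - δ * (2 * sin θ ^ 2 - 1)) ^ ((3:ℝ) / 2)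
      = 1 / (1 + δ) ^ ((3:ℝ) / 2) * (1 / (1 - m * sin θ ^ 2) ^ ((3:ℝ) / 2)) := fun θ => by
    have hsplit : 1 - δ * (2 * sin θ ^ 2 - 1) = (1 + δ) * (1 - m * sin θ ^ 2) := by
      rw [hm_def]; field_simp; ring
    rw [hsplit, mul_rpow hpos.le (one_sub_mul_sin_sq_pos hm θ).le, one_div_mul_one_div]
  rw [integral_comp_sin_two_pi_mul (continuousOn_one_div_one_sub_mul_rpow hδ _), smul_eq_mul,
    integral_congr fun θ _ => hfactor θ, integral_const_mul,
    ellipticE_eq_one_sub_mul_integral hm, rpow_three_halves_eq_mul_sqrt hpos.le, hm_def]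
  field_simp
  ring
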